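/- Let T and P be p-strings, m = |P|, and let i be a position with 1 ≤ i and i + m − 1 ≤ |T|. Then T[i : i+m−1] ≈ P if and only if prev(P) equals the length-m prefix of prev(T[i:]), where T[i:] is the suffix of T starting at position i. (Hence the p-beginning positions of P in T are exactly the positions i such that prev(P) is a prefix of prev(T[i:]).) -/

import Mathlib

/-- p-match: a bijection on `Σ ∪ Π` (here `S ⊕ P`, static chars `Sum.inl`) which is the
identity on static characters and maps `y` onto `x` positionwise. -/
def PMatch {S P : Type*} (x y : List (S ⊕ P)) : Prop :=
  ∃ f : (S ⊕ P) → (S ⊕ P), Function.Bijective f ∧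
    (∀ s : S, f (Sum.inl s) = Sum.inl s) ∧ x = y.map f

/-- The `i`-th entry (0-based) of the previous encoding: a static character stays itself;
a parameterized character is replaced by the distance to its previous occurrence,
or by `0` if it has no previous occurrence. -/
def prevEntry {S P : Type*} [DecidableEq S] [DecidableEq P]
    (w : List (S ⊕ P)) (i : ℕ) : S ⊕ ℕ :=
  match w[i]? with
  | some (Sum.inl s) => Sum.inl s
  | _ => Sum.inr (i - (WithBot.unbotD i ((Finset.range i).filter fun j => w[j]? = w[i]?).max))

/-- The previous encoding `prev(w)`, a string of length `|w|` over `Σ ∪ ℕ`. -/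
def prev {S P : Type*} [DecidableEq S] [DecidableEq P]
    (w : List (S ⊕ P)) : List (S ⊕ ℕ) :=
  List.ofFn fun i : Fin w.length => prevEntry w i

/-! `prev` records at each position only whether the letter is static (and which) and, for a
parameterized letter, the distance back to its previous occurrence; a permutation of the alphabet
fixing the static letters changes neither. Conversely, by following these back-pointers, equal
encodings force the same pattern of equal positions, and two words of equal length with the same
pattern differ by a permutation of the alphabet that may be chosen to fix every letter occurring
in neither word, hence every static letter. Finally, `prev` of a prefix is the prefix of `prev`. -/

theorem List.exists_perm_eq_map_of_getElem?_eq_iff {α : Type*} [DecidableEq α] :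
    ∀ {x y : List α}, x.length = y.length → (∀ i j : ℕ, x[i]? = x[j]? ↔ y[i]? = y[j]?) →
      ∃ g : Equiv.Perm α, x = y.map g ∧ ∀ a, a ∉ x → a ∉ y → g a = a
  | [], [], _, _ => ⟨1, rfl, fun _ _ _ => rfl⟩
  | a :: x, b :: y, hl, h => by
    obtain ⟨g, rfl, hg⟩ := exists_perm_eq_map_of_getElem?_eq_iff (by simpa using hl)
      fun i j => by simpa using h (i + 1) (j + 1)
    have head_iff (k : ℕ) : (y.map g)[k]? = some a ↔ y[k]? = some b := by
      simpa [eq_comm] using h 0 (k + 1)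
    by_cases hb : b ∈ y
    · obtain ⟨k, hk⟩ := List.mem_iff_getElem?.mp hb
      have hgb : g b = a := by simpa [hk] using (head_iff k).2 hk
      exact ⟨g, by simp [hgb], fun c hca hcb => hg c (by simp_all) (by simp_all)⟩
    · have ha : a ∉ y.map g := fun ha => by
        obtain ⟨k, hk⟩ := List.mem_iff_getElem?.mp ha
        exact hb (List.mem_of_getElem? ((head_iff k).1 hk))
      -- `g` already sends `y` onto its image, which avoids both `a` and `g b`
      have fixes_image {c : α} (hc : c ∈ y) : Equiv.swap a (g b) (g c) = g c :=
        Equiv.swap_apply_of_ne_of_ne (fun h => ha (h ▸ List.mem_map_of_mem hc))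
          (fun h => hb (g.injective h ▸ hc))
      refine ⟨Equiv.swap a (g b) * g, ?_, fun c hca hcb => ?_⟩
      · simp only [List.map_cons, Equiv.Perm.coe_mul, Function.comp_apply,
          Equiv.swap_apply_right, List.cons.injEq, true_and]
        exact (List.map_congr_left fun c hc => fixes_image hc).symm
      · simp only [List.mem_cons, not_or] at hca hcb
        rw [Equiv.Perm.mul_apply, hg c hca.2 hcb.2]
        exact Equiv.swap_apply_of_ne_of_ne hca.1
          fun h => hcb.1 (g.injective (h ▸ (hg c hca.2 hcb.2).symm)).symm

open Sum

def prevOcc {α : Type*} [DecidableEq α] (w : List α) (i : ℕ) : WithBot ℕ :=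
  ((Finset.range i).filter fun j => w[j]? = w[i]?).max

section PrevOcc

variable {α : Type*} [DecidableEq α]

theorem prevOcc_eq_coe {w : List α} {i k : ℕ} (h : prevOcc w i = k) :
    k < i ∧ w[k]? = w[i]? := by
  simpa using Finset.mem_of_max h

theorem getElem?_eq_iff_prevOcc {w : List α} {i j : ℕ} (hji : j < i) :
    w[j]? = w[i]? ↔ ∃ k : ℕ, prevOcc w i = k ∧ j ≤ k ∧ w[j]? = w[k]? := by
  constructor
  · intro h
    have hj : j ∈ (Finset.range i).filter fun j => w[j]? = w[i]? := by simp [hji, h]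
    obtain ⟨k, hk⟩ := Finset.max_of_mem hj
    exact ⟨k, hk, Finset.le_max_of_eq hj hk, h.trans (prevOcc_eq_coe hk).2.symm⟩
  · rintro ⟨k, hk, -, h⟩
    exact h.trans (prevOcc_eq_coe hk).2

end PrevOcc

section Prev

variable {S P : Type*} [DecidableEq S] [DecidableEq P]

theorem prevEntry_eq_inl_iff {w : List (S ⊕ P)} {i : ℕ} {s : S} :
    prevEntry w i = inl s ↔ w[i]? = some (inl s) := by
  unfold prevEntry
  split <;> simp_all

theorem prevEntry_eq_inr {w : List (S ⊕ P)} {i : ℕ} (h : ∀ s, w[i]? ≠ some (inl s)) :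
    prevEntry w i = inr (i - (prevOcc w i).unbotD i) := by
  unfold prevEntry prevOcc
  split
  · simp_all
  · rfl

theorem prevOcc_eq_of_prevEntry_eq {x y : List (S ⊕ P)} {i : ℕ}
    (hx : ∀ s, x[i]? ≠ some (inl s)) (hy : ∀ s, y[i]? ≠ some (inl s))
    (h : prevEntry x i = prevEntry y i) : prevOcc x i = prevOcc y i := by
  rw [prevEntry_eq_inr hx, prevEntry_eq_inr hy, inr.injEq] at h
  have hxi {k : ℕ} (hk : prevOcc x i = k) : k < i := (prevOcc_eq_coe hk).1
  have hyi {k : ℕ} (hk : prevOcc y i = k) : k < i := (prevOcc_eq_coe hk).1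
  generalize prevOcc x i = a at h hxi ⊢
  generalize prevOcc y i = b at h hyi ⊢
  induction a using WithBot.recBotCoe <;> induction b using WithBot.recBotCoe <;>
    simp only [WithBot.unbotD_bot, WithBot.unbotD_coe, WithBot.coe_inj] at h ⊢
  · have := hyi rfl; omega
  · have := hxi rfl; omega
  · have := hxi rfl; have := hyi rfl; omega

theorem prevEntry_congr {x y : List (S ⊕ P)} {n : ℕ}
    (hs : ∀ s, x[n]? = some (inl s) ↔ y[n]? = some (inl s))
    (hp : ∀ j < n, x[j]? = x[n]? ↔ y[j]? = y[n]?) : prevEntry x n = prevEntry y n := by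
  by_cases hx : ∃ s, x[n]? = some (inl s)
  · obtain ⟨s, hx⟩ := hx
    rw [prevEntry_eq_inl_iff.2 hx, prevEntry_eq_inl_iff.2 ((hs s).1 hx)]
  · push Not at hx
    rw [prevEntry_eq_inr hx, prevEntry_eq_inr fun s hy => hx s ((hs s).2 hy), prevOcc, prevOcc,
      Finset.filter_congr fun j hj => hp j (Finset.mem_range.1 hj)]

theorem length_prev (w : List (S ⊕ P)) : (prev w).length = w.length := by
  simp [prev]

theorem getElem_prev (w : List (S ⊕ P)) (n : ℕ) (h : n < (prev w).length) :
    (prev w)[n] = prevEntry w n := by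
  simp [prev]

theorem prev_eq_prev_iff {x y : List (S ⊕ P)} :
    prev x = prev y ↔ x.length = y.length ∧ ∀ n, prevEntry x n = prevEntry y n := by
  constructor
  · intro h
    have hl : x.length = y.length := by simpa [length_prev] using congrArg List.length h
    refine ⟨hl, fun n => ?_⟩
    by_cases hn : n < x.length
    · have := List.getElem_of_eq h (by rwa [length_prev] : n < (prev x).length)
      rwa [getElem_prev, getElem_prev] at this
    · have hxn : x[n]? = none := List.getElem?_eq_none (by omega)
      have hyn : y[n]? = none := List.getElem?_eq_none (by omega)
      refine prevEntry_congr (by simp [hxn, hyn]) fun j _ => ?_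
      rw [hxn, hyn, List.getElem?_eq_none_iff, List.getElem?_eq_none_iff, hl]
  · rintro ⟨hl, he⟩
    exact List.ext_getElem (by simp [length_prev, hl]) fun n _ _ => by simp [getElem_prev, he]

theorem prev_take (w : List (S ⊕ P)) (m : ℕ) : prev (w.take m) = (prev w).take m := by
  refine List.ext_getElem (by simp [length_prev]) fun n hn _ => ?_
  have hnm : n < m := by simp [length_prev] at hn; omega
  rw [List.getElem_take, getElem_prev, getElem_prev]
  exact prevEntry_congr (by simp [hnm]) fun j hj => by simp [hnm, hj.trans hnm]

theorem prev_map {f : S ⊕ P → S ⊕ P} (hf : Function.Injective f) (hfix : ∀ s, f (inl s) = inl s)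
    (w : List (S ⊕ P)) : prev (w.map f) = prev w := by
  refine prev_eq_prev_iff.2 ⟨w.length_map f, fun n => prevEntry_congr (fun s => ?_) fun j _ => ?_⟩
  · simp only [List.getElem?_map, Option.map_eq_some_iff]
    exact ⟨fun ⟨c, hc, hfc⟩ => hf (hfc.trans (hfix s).symm) ▸ hc, fun h => ⟨_, h, hfix s⟩⟩
  · simp only [List.getElem?_map]
    exact (Option.map_injective hf).eq_iff

theorem getElem?_eq_some_inl_iff_of_prevEntry_eq {x y : List (S ⊕ P)}
    (he : ∀ n, prevEntry x n = prevEntry y n) (n : ℕ) (s : S) :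
    x[n]? = some (inl s) ↔ y[n]? = some (inl s) := by
  rw [← prevEntry_eq_inl_iff, ← prevEntry_eq_inl_iff, he]

/-- By strong induction on `i`: at a parameterized position the entry points to the previous
occurrence `k` of `x[i]`, and every earlier occurrence of `x[i]` is an occurrence of `x[k]`. -/
theorem getElem?_eq_iff_of_prevEntry_eq {x y : List (S ⊕ P)}
    (he : ∀ n, prevEntry x n = prevEntry y n) (i j : ℕ) :
    x[j]? = x[i]? ↔ y[j]? = y[i]? := by
  have static_iff := getElem?_eq_some_inl_iff_of_prevEntry_eq he
  wlog hji : j ≤ i generalizing i j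
  · simpa only [eq_comm] using this j i (by omega)
  induction i using Nat.strong_induction_on generalizing j with
  | _ i ih =>
    rcases hji.eq_or_lt with rfl | hji
    · exact iff_of_true rfl rfl
    by_cases hx : ∃ s, x[i]? = some (inl s)
    · obtain ⟨s, hx⟩ := hx
      rw [hx, (static_iff i s).1 hx, static_iff]
    · push Not at hx
      have hy (s : S) : y[i]? ≠ some (inl s) := fun hy => hx s ((static_iff i s).2 hy)
      rw [getElem?_eq_iff_prevOcc hji, getElem?_eq_iff_prevOcc hji,
        prevOcc_eq_of_prevEntry_eq hx hy (he i)]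
      refine exists_congr fun k => and_congr_right fun hk => and_congr_right fun hjk => ?_
      exact ih k (prevOcc_eq_coe hk).1 j hjk

theorem pmatch_of_prev_eq {x y : List (S ⊕ P)} (h : prev x = prev y) : PMatch x y := by
  obtain ⟨hl, he⟩ := prev_eq_prev_iff.1 h
  have static_iff := getElem?_eq_some_inl_iff_of_prevEntry_eq he
  obtain ⟨g, rfl, hg⟩ := List.exists_perm_eq_map_of_getElem?_eq_iff hl
    fun i j => getElem?_eq_iff_of_prevEntry_eq he j i
  refine ⟨g, g.bijective, fun s => ?_, rfl⟩
  by_cases hy : inl s ∈ y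
  · obtain ⟨n, hn⟩ := List.mem_iff_getElem?.mp hy
    simpa [hn] using (static_iff n s).2 hn
  · refine hg _ (fun hx => hy ?_) hy
    obtain ⟨n, hn⟩ := List.mem_iff_getElem?.mp hx
    exact List.mem_of_getElem? ((static_iff n s).1 hn)

theorem pmatch_iff_prev_eq {x y : List (S ⊕ P)} : PMatch x y ↔ prev x = prev y := by
  refine ⟨?_, pmatch_of_prev_eq⟩
  rintro ⟨f, hf, hfix, rfl⟩
  exact prev_map hf.injective hfix y

end Prev

theorem pmatch_iff_prev_prefix_general {S P : Type*} [DecidableEq S] [DecidableEq P]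
    (T pat : List (S ⊕ P)) (i : ℕ) :
    PMatch ((T.drop (i - 1)).take pat.length) pat ↔
      prev pat = (prev (T.drop (i - 1))).take pat.length := by
  rw [pmatch_iff_prev_eq, ← prev_take, eq_comm]

/-- let `T` and `pat` be p-strings, `m = |pat|`, and `i` a (1-based)
position with `1 ≤ i` and `i + m − 1 ≤ |T|`.  Then the substring
`T[i : i+m−1] = (T.drop (i-1)).take m` p-matches `pat` if and only if `prev(pat)`
equals the length-`m` prefix of `prev(T[i:])`, where `T[i:] = T.drop (i-1)` is the
suffix of `T` starting at position `i`. -/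
theorem pmatch_iff_prev_prefix {S P : Type*} [DecidableEq S] [DecidableEq P]
    (T pat : List (S ⊕ P)) (i : ℕ) (h1 : 1 ≤ i)
    (h2 : i + pat.length - 1 ≤ T.length) :
    PMatch ((T.drop (i - 1)).take pat.length) pat ↔
      prev pat = (prev (T.drop (i - 1))).take pat.length :=
  pmatch_iff_prev_prefix_general T pat i
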